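/- arXiv:2404.11693 — 2 statements merged into one kernel-verified Lean document; each statement's English description precedes it below -/
import Mathlib

section
/- Assume (φ1)–(φ3) and (V1)–(V5). Then problem (P) has exactly one heteroclinic solution: there exists a heteroclinic solution q of (P), and every heteroclinic solution of (P) is equal to q. -/
/-!
Along a heteroclinic `q` the energy `kinetic φ q' - V q` is constant, where
`kinetic φ x = φ(|x|) x² - Φ(x)` is strictly increasing in `|x|`; it vanishes because `q'` is
small at arbitrarily large times while `V q → V α = 0`. Hence `|q'| = g(q)` for the speed
`g = kinetic⁻¹ ∘ V`, positive on `(-α, α)`. By (V3) and (φ2)–(φ3), `g(u) ≤ C · dist(u, ±α)`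
near the equilibria, so the travel time `T(u) = ∫₀ᵘ dv / g(v)` diverges logarithmically at
`±α` and is an increasing bijection `(-α, α) → ℝ`. Its inverse solves `q' = g(q)` and is a
heteroclinic. Conversely, the same divergence keeps every heteroclinic inside `(-α, α)`
(`|T ∘ q|` grows at most linearly in time), so `q'` never vanishes, `q' = g(q)`, `T ∘ q = id`,
and `q = T⁻¹`.
-/

open Real Filter Set MeasureTheory

noncomputable def Phi (φ : ℝ → ℝ) (t : ℝ) : ℝ := ∫ s in (0:ℝ)..|t|, s * φ s

def IsClassicalSolution (φ V q : ℝ → ℝ) : Prop :=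
  Differentiable ℝ q ∧
  ∀ t : ℝ, HasDerivAt
    (fun s => if deriv q s = 0 then 0 else φ |deriv q s| * deriv q s)
    (deriv V (q t)) t

def IsHeteroclinic (φ V : ℝ → ℝ) (α : ℝ) (q : ℝ → ℝ) : Prop :=
  IsClassicalSolution φ V q ∧ Differentiable ℝ (deriv q) ∧ Continuous (deriv q) ∧
  q 0 = 0 ∧ Tendsto q atTop (nhds α) ∧ Tendsto q atBot (nhds (-α))

open Topology Function

lemma le_of_hasDerivAt_nonneg {f f' : ℝ → ℝ} {a b : ℝ} (hab : a ≤ b)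
    (hf : ContinuousOn f (Icc a b)) (hf' : ∀ x ∈ Ioo a b, HasDerivAt f (f' x) x)
    (hpos : ∀ x ∈ Ioo a b, 0 ≤ f' x) : f a ≤ f b := by
  have hmono := monotoneOn_of_hasDerivWithinAt_nonneg (convex_Icc a b) hf
    (fun x hx => (hf' x (by rwa [interior_Icc] at hx)).hasDerivWithinAt)
    (fun x hx => hpos x (by rwa [interior_Icc] at hx))
  exact hmono ⟨le_rfl, hab⟩ ⟨hab, le_rfl⟩ hab

lemma StrictMonoOn.continuousAt_of_rightInvOn {f g : ℝ → ℝ} {s t : Set ℝ}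
    (hf : StrictMonoOn f s) (hs : IsOpen s) (ht : IsOpen t) (hfs : MapsTo f s t)
    (hgt : MapsTo g t s) (hfg : RightInvOn g f t) {y : ℝ} (hy : y ∈ t) : ContinuousAt g y := by
  have hmono : MonotoneOn g t := fun y₁ h₁ y₂ h₂ hle => by
    rwa [← hf.le_iff_le (hgt h₁) (hgt h₂), hfg h₁, hfg h₂]
  have himage : g '' t = s := by
    refine (image_subset_iff.2 hgt).antisymm fun x hx => ⟨f x, hfs hx, ?_⟩
    exact hf.injOn (hgt (hfs hx)) hx (hfg (hfs hx))
  exact continuousAt_of_monotoneOn_of_image_mem_nhds hmono (ht.mem_nhds hy)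
    (himage ▸ hs.mem_nhds (hgt hy))

lemma exists_seq_tendsto_deriv_zero {q : ℝ → ℝ} {a : ℝ} (hq : Differentiable ℝ q)
    (hlim : Tendsto q atTop (𝓝 a)) :
    ∃ ξ : ℕ → ℝ, Tendsto ξ atTop atTop ∧ Tendsto (fun n => deriv q (ξ n)) atTop (𝓝 0) := by
  have hslope (n : ℕ) : ∃ c ∈ Ioo (n : ℝ) (n + 1), deriv q c = q (n + 1) - q n := by
    simpa using exists_deriv_eq_slope q (lt_add_one (n : ℝ)) hq.continuous.continuousOn
      hq.differentiableOn
  choose ξ hξ hderiv using hslope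
  refine ⟨ξ, tendsto_atTop_mono (fun n => (hξ n).1.le) tendsto_natCast_atTop_atTop, ?_⟩
  have hshift : Tendsto (fun n : ℕ => (n : ℝ) + 1) atTop atTop :=
    tendsto_atTop_add_const_right _ 1 tendsto_natCast_atTop_atTop
  simpa [hderiv, comp_def] using (hlim.comp hshift).sub (hlim.comp tendsto_natCast_atTop_atTop)

lemma Continuous.pos_of_forall_ne_zero {f : ℝ → ℝ} (hf : Continuous f) (hne : ∀ x, f x ≠ 0)
    {x₀ : ℝ} (h₀ : 0 < f x₀) (x : ℝ) : 0 < f x := by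
  by_contra! hx
  obtain ⟨c, -, hc⟩ := intermediate_value_uIcc hf.continuousOn (mem_uIcc.2 (Or.inl ⟨hx, h₀.le⟩))
  exact hne c hc

lemma deriv_pos_of_forall_ne_zero {q : ℝ → ℝ} {a : ℝ} (ha : 0 < a) (hq : Differentiable ℝ q)
    (hq' : Continuous (deriv q)) (hq0 : q 0 = 0) (hlim : Tendsto q atTop (𝓝 a))
    (hne : ∀ t, deriv q t ≠ 0) (t : ℝ) : 0 < deriv q t := by
  obtain ⟨T, hT, hT0⟩ :=
    ((hlim.eventually (eventually_gt_nhds ha)).and (eventually_gt_atTop 0)).exists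
  obtain ⟨ξ, -, hξ⟩ := exists_deriv_eq_slope q hT0 hq.continuous.continuousOn hq.differentiableOn
  exact hq'.pos_of_forall_ne_zero hne (x₀ := ξ)
    (by rw [hξ, hq0, sub_zero, sub_zero]; exact div_pos hT hT0) t

lemma integral_mul_rpow_sub_one (c : ℝ) {r : ℝ} (hr : 0 < r) (u : ℝ) :
    ∫ x in (0:ℝ)..u, c * x ^ (r - 1) = c / r * u ^ r := by
  rw [intervalIntegral.integral_const_mul, integral_rpow (Or.inl (by linarith)), sub_add_cancel,
    zero_rpow hr.ne']
  ring

namespace PhiLaplacian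

noncomputable def flux (φ : ℝ → ℝ) (x : ℝ) : ℝ := φ |x| * x

noncomputable def kinetic (φ : ℝ → ℝ) (x : ℝ) : ℝ := flux φ x * x - Phi φ x

noncomputable def kineticInv (φ : ℝ → ℝ) : ℝ → ℝ := invFunOn (kinetic φ) (Ici 0)

noncomputable def speed (φ V : ℝ → ℝ) (u : ℝ) : ℝ := kineticInv φ (V u)

noncomputable def travelTime (φ V : ℝ → ℝ) (u : ℝ) : ℝ := ∫ v in (0:ℝ)..u, (speed φ V v)⁻¹

noncomputable def orbit (φ V : ℝ → ℝ) (α : ℝ) : ℝ → ℝ := invFunOn (travelTime φ V) (Ioo (-α) α)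

variable {φ V : ℝ → ℝ} {α : ℝ}

lemma flux_of_nonneg {x : ℝ} (hx : 0 ≤ x) : flux φ x = φ x * x := by
  rw [flux, abs_of_nonneg hx]

lemma flux_neg (x : ℝ) : flux φ (-x) = -flux φ x := by
  simp [flux]

lemma flux_eq_ite (x : ℝ) : (if x = 0 then 0 else φ |x| * x) = flux φ x := by
  split_ifs with hx <;> simp [flux, hx]

lemma Phi_neg (x : ℝ) : Phi φ (-x) = Phi φ x := by
  simp [Phi]

lemma Phi_eq_integral_flux_of_nonneg {x : ℝ} (hx : 0 ≤ x) :
    Phi φ x = ∫ s in (0:ℝ)..x, flux φ s := by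
  rw [Phi, abs_of_nonneg hx]
  refine intervalIntegral.integral_congr fun s hs => ?_
  rw [uIcc_of_le hx] at hs
  simp [flux_of_nonneg hs.1, mul_comm]

lemma Phi_eq_integral_flux (x : ℝ) : Phi φ x = ∫ s in (0:ℝ)..x, flux φ s := by
  rcases le_total 0 x with hx | hx
  · exact Phi_eq_integral_flux_of_nonneg hx
  · have h := intervalIntegral.integral_comp_neg (a := 0) (b := -x) (flux φ)
    simp only [flux_neg, intervalIntegral.integral_neg, neg_neg, neg_zero] at h
    rw [← Phi_neg, Phi_eq_integral_flux_of_nonneg (neg_nonneg.2 hx),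
      intervalIntegral.integral_symm x 0, ← h, neg_neg]

lemma kinetic_zero : kinetic φ 0 = 0 := by
  simp [kinetic, Phi]

lemma kinetic_neg (x : ℝ) : kinetic φ (-x) = kinetic φ x := by
  simp [kinetic, flux_neg, Phi_neg]

lemma kinetic_abs (x : ℝ) : kinetic φ |x| = kinetic φ x := by
  rcases abs_choice x with h | h <;> rw [h]
  exact kinetic_neg x

structure GrowthData (φ : ℝ → ℝ) where
  l : ℝ
  c₁ : ℝ
  c₂ : ℝ
  δ₀ : ℝ
  r : ℝ
  contDiffOn : ContDiffOn ℝ 1 φ (Ioi 0)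
  pos : ∀ t > 0, 0 < φ t
  one_lt_l : 1 < l
  sub_one_le : ∀ t > 0, l - 1 ≤ deriv (fun s => φ s * s) t / φ t
  c₁_pos : 0 < c₁
  c₂_pos : 0 < c₂
  δ₀_pos : 0 < δ₀
  one_lt_r : 1 < r
  bounds : ∀ t : ℝ, 0 < t → t ≤ δ₀ → c₁ * t ^ (r - 1) ≤ φ t * t ∧ φ t * t ≤ c₂ * t ^ (r - 1)

namespace GrowthData

lemma continuousAt (h : GrowthData φ) {t : ℝ} (ht : 0 < t) : ContinuousAt φ t :=
  h.contDiffOn.continuousOn.continuousAt (Ioi_mem_nhds ht)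

lemma hasDerivAt_mul_id (h : GrowthData φ) {t : ℝ} (ht : 0 < t) :
    HasDerivAt (fun s => φ s * s) (deriv (fun s => φ s * s) t) t :=
  (((h.contDiffOn.differentiableOn one_ne_zero).differentiableAt (Ioi_mem_nhds ht)).mul
    differentiableAt_id).hasDerivAt

lemma sub_one_mul_le_deriv (h : GrowthData φ) {t : ℝ} (ht : 0 < t) :
    (h.l - 1) * φ t ≤ deriv (fun s => φ s * s) t :=
  (le_div_iff₀ (h.pos t ht)).1 (h.sub_one_le t ht)

lemma deriv_pos (h : GrowthData φ) {t : ℝ} (ht : 0 < t) : 0 < deriv (fun s => φ s * s) t :=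
  (mul_pos (sub_pos.2 h.one_lt_l) (h.pos t ht)).trans_le (h.sub_one_mul_le_deriv ht)

lemma flux_pos (h : GrowthData φ) {x : ℝ} (hx : 0 < x) : 0 < flux φ x := by
  rw [flux_of_nonneg hx.le]
  exact mul_pos (h.pos x hx) hx

lemma abs_flux_le (h : GrowthData φ) {x : ℝ} (hx : |x| ≤ h.δ₀) :
    |flux φ x| ≤ h.c₂ * |x| ^ (h.r - 1) := by
  rcases eq_or_ne x 0 with rfl | hx0
  · simp [flux, zero_rpow (sub_pos.2 h.one_lt_r).ne']
  have habs : |flux φ x| = φ |x| * |x| := by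
    rw [flux, abs_mul, abs_of_pos (h.pos _ (abs_pos.2 hx0))]
  rw [habs]
  exact (h.bounds |x| (abs_pos.2 hx0) hx).2

lemma continuous_flux (h : GrowthData φ) : Continuous (flux φ) := by
  refine continuous_iff_continuousAt.2 fun x => ?_
  rcases eq_or_ne x 0 with rfl | hx
  · have hr : 0 < h.r - 1 := sub_pos.2 h.one_lt_r
    have hbound : Tendsto (fun y => h.c₂ * |y| ^ (h.r - 1)) (𝓝 0) (𝓝 0) := by
      simpa [zero_rpow hr.ne'] using
        ((continuous_abs.rpow_const fun _ => Or.inr hr.le).const_mul h.c₂).tendsto 0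
    rw [ContinuousAt, show flux φ 0 = 0 by simp [flux]]
    refine squeeze_zero_norm' ?_ hbound
    filter_upwards [eventually_abs_sub_lt 0 h.δ₀_pos] with y hy
    rw [Real.norm_eq_abs]
    exact h.abs_flux_le (by simpa using hy.le)
  · exact ((h.continuousAt (abs_pos.2 hx)).comp continuous_abs.continuousAt).mul continuousAt_id

lemma hasDerivAt_flux (h : GrowthData φ) {x : ℝ} (hx : 0 < x) :
    HasDerivAt (flux φ) (deriv (fun s => φ s * s) x) x :=
  (h.hasDerivAt_mul_id hx).congr_of_eventuallyEq
    ((eventually_gt_nhds hx).mono fun _ hy => flux_of_nonneg hy.le)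

lemma monotoneOn_flux (h : GrowthData φ) : MonotoneOn (flux φ) (Ici 0) :=
  (strictMonoOn_of_deriv_pos (convex_Ici 0) h.continuous_flux.continuousOn fun x hx => by
    rw [interior_Ici] at hx
    rw [(h.hasDerivAt_flux hx).deriv]
    exact h.deriv_pos hx).monotoneOn

lemma hasDerivAt_Phi (h : GrowthData φ) (x : ℝ) : HasDerivAt (Phi φ) (flux φ x) x := by
  rw [show Phi φ = fun x => ∫ s in (0:ℝ)..x, flux φ s from funext Phi_eq_integral_flux]
  exact (h.continuous_flux.integral_hasStrictDerivAt 0 x).hasDerivAt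

lemma continuous_Phi (h : GrowthData φ) : Continuous (Phi φ) :=
  continuous_iff_continuousAt.2 fun x => (h.hasDerivAt_Phi x).continuousAt

lemma continuous_kinetic (h : GrowthData φ) : Continuous (kinetic φ) :=
  (h.continuous_flux.mul continuous_id).sub h.continuous_Phi

lemma hasDerivAt_kinetic (h : GrowthData φ) {x : ℝ} (hx : 0 < x) :
    HasDerivAt (kinetic φ) (deriv (fun s => φ s * s) x * x) x :=
  (((h.hasDerivAt_flux hx).mul (hasDerivAt_id x)).sub (h.hasDerivAt_Phi x)).congr_deriv
    (by simp)

lemma strictMonoOn_kinetic (h : GrowthData φ) : StrictMonoOn (kinetic φ) (Ici 0) :=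
  strictMonoOn_of_deriv_pos (convex_Ici 0) h.continuous_kinetic.continuousOn fun x hx => by
    rw [interior_Ici] at hx
    rw [(h.hasDerivAt_kinetic hx).deriv]
    exact mul_pos (h.deriv_pos hx) hx

lemma kinetic_pos (h : GrowthData φ) {x : ℝ} (hx : 0 < x) : 0 < kinetic φ x := by
  simpa [kinetic_zero] using h.strictMonoOn_kinetic (mem_Ici.2 le_rfl) hx.le hx

lemma Phi_nonneg (h : GrowthData φ) {u : ℝ} (hu : 0 ≤ u) : 0 ≤ Phi φ u := by
  rw [Phi_eq_integral_flux_of_nonneg hu]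
  exact intervalIntegral.integral_nonneg hu fun x hx =>
    (eq_or_lt_of_le hx.1).elim (fun e => by simp [← e, flux]) fun hx => (h.flux_pos hx).le

lemma Phi_le (h : GrowthData φ) {u : ℝ} (hu : 0 ≤ u) (huδ : u ≤ h.δ₀) :
    Phi φ u ≤ h.c₂ / h.r * u ^ h.r := by
  have hr : 0 < h.r := zero_lt_one.trans h.one_lt_r
  rw [Phi_eq_integral_flux_of_nonneg hu, ← integral_mul_rpow_sub_one h.c₂ hr u]
  refine intervalIntegral.integral_mono_on hu (h.continuous_flux.intervalIntegrable _ _)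
    ((intervalIntegral.intervalIntegrable_rpow' (by linarith [h.one_lt_r])).const_mul _)
    fun x hx => ?_
  have := h.abs_flux_le (x := x) (by rw [abs_of_nonneg hx.1]; exact hx.2.trans huδ)
  rw [abs_of_nonneg hx.1] at this
  exact (le_abs_self _).trans this

lemma le_Phi (h : GrowthData φ) {u : ℝ} (hu : 0 ≤ u) (huδ : u ≤ h.δ₀) :
    h.c₁ / h.r * u ^ h.r ≤ Phi φ u := by
  have hr : 0 < h.r := zero_lt_one.trans h.one_lt_r
  rw [Phi_eq_integral_flux_of_nonneg hu, ← integral_mul_rpow_sub_one h.c₁ hr u]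
  refine intervalIntegral.integral_mono_on hu
    ((intervalIntegral.intervalIntegrable_rpow' (by linarith [h.one_lt_r])).const_mul _)
    (h.continuous_flux.intervalIntegrable _ _) fun x hx => ?_
  rcases eq_or_lt_of_le hx.1 with e | hx0
  · simp [← e, flux, zero_rpow (sub_pos.2 h.one_lt_r).ne']
  · rw [flux_of_nonneg hx.1]
    exact (h.bounds x hx0 (hx.2.trans huδ)).1

lemma sub_one_mul_Phi_le_kinetic (h : GrowthData φ) {x : ℝ} (hx : 0 ≤ x) :
    (h.l - 1) * Phi φ x ≤ kinetic φ x := by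
  have key := le_of_hasDerivAt_nonneg (f := fun x => kinetic φ x - (h.l - 1) * Phi φ x)
    (f' := fun x => deriv (fun s => φ s * s) x * x - (h.l - 1) * flux φ x) hx
    (h.continuous_kinetic.sub (continuous_const.mul h.continuous_Phi)).continuousOn
    (fun x hx => (h.hasDerivAt_kinetic hx.1).sub ((h.hasDerivAt_Phi x).const_mul _))
    fun x hx => by
      rw [flux_of_nonneg hx.1.le, sub_nonneg, ← mul_assoc]
      exact mul_le_mul_of_nonneg_right (h.sub_one_mul_le_deriv hx.1) hx.1.le
  simpa [kinetic_zero, Phi] using key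

lemma tendsto_Phi_atTop (h : GrowthData φ) : Tendsto (Phi φ) atTop atTop := by
  have hlin : ∀ u, 1 ≤ u → flux φ 1 * (u - 1) ≤ Phi φ u := by
    intro u hu
    have key := le_of_hasDerivAt_nonneg (f := fun x => Phi φ x - flux φ 1 * x)
      (f' := fun x => flux φ x - flux φ 1) hu
      (h.continuous_Phi.sub (continuous_const.mul continuous_id)).continuousOn
      (fun x _ => (h.hasDerivAt_Phi x).sub (by simpa using (hasDerivAt_id x).const_mul (flux φ 1)))
      fun x hx => sub_nonneg.2 (h.monotoneOn_flux (mem_Ici.2 zero_le_one)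
        (mem_Ici.2 (zero_le_one.trans hx.1.le)) hx.1.le)
    linarith [h.Phi_nonneg zero_le_one]
  refine tendsto_atTop_mono' atTop ((eventually_ge_atTop 1).mono hlin) ?_
  exact (tendsto_atTop_add_const_right _ (-1) tendsto_id).const_mul_atTop (h.flux_pos one_pos)

lemma tendsto_kinetic_atTop (h : GrowthData φ) : Tendsto (kinetic φ) atTop atTop :=
  tendsto_atTop_mono' atTop
    ((eventually_ge_atTop 0).mono fun _ hx => h.sub_one_mul_Phi_le_kinetic hx)
    (h.tendsto_Phi_atTop.const_mul_atTop (sub_pos.2 h.one_lt_l))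

lemma exists_mul_Phi_le_kinetic (h : GrowthData φ) {a : ℝ} (ha : 0 < a) :
    ∃ C > 0, ∃ d > 0, ∀ e, 0 < e → e ≤ d → a * Phi φ e ≤ kinetic φ (C * e) := by
  have hl : 0 < h.l - 1 := sub_pos.2 h.one_lt_l
  have hr : 0 < h.r := zero_lt_one.trans h.one_lt_r
  have hc₁ := h.c₁_pos
  have hc₂ := h.c₂_pos
  set B := a * h.c₂ / ((h.l - 1) * h.c₁)
  set C := max 1 (B ^ h.r⁻¹)
  have hC : 0 < C := zero_lt_one.trans_le (le_max_left _ _)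
  have hBC : a * h.c₂ ≤ (h.l - 1) * h.c₁ * C ^ h.r := by
    have : B ≤ C ^ h.r :=
      calc B = (B ^ h.r⁻¹) ^ h.r := by
            rw [← rpow_mul (by positivity), inv_mul_cancel₀ hr.ne', rpow_one]
        _ ≤ C ^ h.r := rpow_le_rpow (by positivity) (le_max_right _ _) hr.le
    rw [div_le_iff₀ (by positivity)] at this
    linarith
  refine ⟨C, hC, h.δ₀ / C, div_pos h.δ₀_pos hC, fun e he hed => ?_⟩
  have hCe : C * e ≤ h.δ₀ := by rwa [le_div_iff₀ hC, mul_comm] at hed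
  have heC : e ≤ C * e := le_mul_of_one_le_left he.le (le_max_left _ _)
  calc a * Phi φ e ≤ a * (h.c₂ / h.r * e ^ h.r) :=
        mul_le_mul_of_nonneg_left (h.Phi_le he.le (heC.trans hCe)) ha.le
    _ = a * h.c₂ * e ^ h.r / h.r := by ring
    _ ≤ (h.l - 1) * h.c₁ * C ^ h.r * e ^ h.r / h.r := by gcongr
    _ = (h.l - 1) * (h.c₁ / h.r * (C * e) ^ h.r) := by rw [mul_rpow hC.le he.le]; ring
    _ ≤ (h.l - 1) * Phi φ (C * e) :=
        mul_le_mul_of_nonneg_left (h.le_Phi (by positivity) hCe) hl.le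
    _ ≤ kinetic φ (C * e) := h.sub_one_mul_Phi_le_kinetic (by positivity)

lemma surjOn_kinetic (h : GrowthData φ) : SurjOn (kinetic φ) (Ici 0) (Ici 0) := by
  intro y hy
  obtain ⟨b, hb, hb0⟩ :=
    ((h.tendsto_kinetic_atTop.eventually_ge_atTop y).and (eventually_ge_atTop 0)).exists
  obtain ⟨x, hx, hxy⟩ := intermediate_value_Icc hb0 h.continuous_kinetic.continuousOn
    ⟨by rw [kinetic_zero]; exact hy, hb⟩
  exact ⟨x, hx.1, hxy⟩

lemma kineticInv_spec (h : GrowthData φ) {y : ℝ} (hy : 0 ≤ y) :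
    0 ≤ kineticInv φ y ∧ kinetic φ (kineticInv φ y) = y :=
  invFunOn_pos (h.surjOn_kinetic hy)

lemma kineticInv_kinetic (h : GrowthData φ) {x : ℝ} (hx : 0 ≤ x) :
    kineticInv φ (kinetic φ x) = x :=
  h.strictMonoOn_kinetic.injOn.leftInvOn_invFunOn hx

lemma kineticInv_pos (h : GrowthData φ) {y : ℝ} (hy : 0 < y) : 0 < kineticInv φ y := by
  obtain ⟨h0, heq⟩ := h.kineticInv_spec hy.le
  refine h0.lt_of_ne fun h0' => ?_
  rw [← h0', kinetic_zero] at heq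
  exact hy.ne heq

lemma kineticInv_le (h : GrowthData φ) {x y : ℝ} (hx : 0 ≤ x) (hy : 0 ≤ y)
    (hyx : y ≤ kinetic φ x) : kineticInv φ y ≤ x := by
  obtain ⟨h0, heq⟩ := h.kineticInv_spec hy
  rwa [← h.strictMonoOn_kinetic.le_iff_le h0 hx, heq]

lemma continuousAt_kineticInv (h : GrowthData φ) {y : ℝ} (hy : 0 < y) :
    ContinuousAt (kineticInv φ) y :=
  (h.strictMonoOn_kinetic.mono Ioi_subset_Ici_self).continuousAt_of_rightInvOn isOpen_Ioi
    isOpen_Ioi (fun _ hx => h.kinetic_pos hx) (fun _ hy => h.kineticInv_pos hy)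
    (fun _ hy => (h.kineticInv_spec (le_of_lt hy)).2) hy

lemma hasDerivAt_kineticInv (h : GrowthData φ) {y : ℝ} (hy : 0 < y) :
    HasDerivAt (kineticInv φ)
      ((deriv (fun s => φ s * s) (kineticInv φ y) * kineticInv φ y)⁻¹) y := by
  have hx := h.kineticInv_pos hy
  exact HasDerivAt.of_local_left_inverse (h.continuousAt_kineticInv hy) (h.hasDerivAt_kinetic hx)
    (mul_pos (h.deriv_pos hx) hx).ne'
    ((eventually_gt_nhds hy).mono fun _ hz => (h.kineticInv_spec hz.le).2)

end GrowthData

lemma travelTime_zero : travelTime φ V 0 = 0 :=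
  intervalIntegral.integral_same

lemma travelTime_comp_neg (u : ℝ) :
    travelTime φ (fun x => V (-x)) u = -travelTime φ V (-u) := by
  simp only [travelTime, speed]
  rw [intervalIntegral.integral_comp_neg (fun v => (kineticInv φ (V v))⁻¹), neg_zero,
    intervalIntegral.integral_symm]

structure PotentialData (φ V : ℝ → ℝ) (α : ℝ) where
  a₂ : ℝ
  a₄ : ℝ
  δ : ℝ
  α_pos : 0 < α
  contDiff : ContDiff ℝ 1 V
  pos : ∀ t, -α < t → t < α → 0 < V t
  a₂_pos : 0 < a₂
  a₄_pos : 0 < a₄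
  δ_pos : 0 < δ
  le_right : ∀ t, α - δ < t → t ≤ α → V t ≤ a₂ * Phi φ |t - α|
  le_left : ∀ t, -α ≤ t → t < -α + δ → V t ≤ a₄ * Phi φ |t + α|

namespace PotentialData

def compNeg (P : PotentialData φ V α) : PotentialData φ (fun x => V (-x)) α where
  a₂ := P.a₄
  a₄ := P.a₂
  δ := P.δ
  α_pos := P.α_pos
  contDiff := P.contDiff.comp contDiff_neg
  pos t h₁ h₂ := P.pos (-t) (by linarith) (by linarith)
  a₂_pos := P.a₄_pos
  a₄_pos := P.a₂_pos
  δ_pos := P.δ_pos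
  le_right t h₁ h₂ := by
    simpa [neg_add_eq_sub, abs_sub_comm] using P.le_left (-t) (by linarith) (by linarith)
  le_left t h₁ h₂ := by
    have := P.le_right (-t) (by linarith) (by linarith)
    rwa [show -t - α = -(t + α) by ring, abs_neg] at this

lemma hasDerivAt (P : PotentialData φ V α) (u : ℝ) : HasDerivAt V (deriv V u) u :=
  (P.contDiff.differentiable one_ne_zero u).hasDerivAt

lemma speed_pos (P : PotentialData φ V α) (h : GrowthData φ) {u : ℝ} (hu : u ∈ Ioo (-α) α) :
    0 < speed φ V u :=
  h.kineticInv_pos (P.pos u hu.1 hu.2)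

lemma hasDerivAt_speed (P : PotentialData φ V α) (h : GrowthData φ) {u : ℝ}
    (hu : u ∈ Ioo (-α) α) :
    HasDerivAt (speed φ V)
      ((deriv (fun s => φ s * s) (speed φ V u) * speed φ V u)⁻¹ * deriv V u) u :=
  (h.hasDerivAt_kineticInv (P.pos u hu.1 hu.2)).comp u (P.hasDerivAt u)

lemma continuousOn_inv_speed (P : PotentialData φ V α) (h : GrowthData φ) :
    ContinuousOn (fun u => (speed φ V u)⁻¹) (Ioo (-α) α) := fun _ hu =>
  ((P.hasDerivAt_speed h hu).continuousAt.inv₀ (P.speed_pos h hu).ne').continuousWithinAt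

lemma eventually_speed_le (P : PotentialData φ V α) (h : GrowthData φ) :
    ∃ C > 0, ∀ᶠ u in 𝓝[<] α, speed φ V u ≤ C * (α - u) := by
  obtain ⟨C, hC, d, hd, hkin⟩ := h.exists_mul_Phi_le_kinetic P.a₂_pos
  refine ⟨C, hC, ?_⟩
  have hnear : ∀ᶠ u in 𝓝[<] α, max (-α) (α - min d P.δ) < u :=
    nhdsWithin_le_nhds (eventually_gt_nhds
      (max_lt (by linarith [P.α_pos]) (by linarith [lt_min hd P.δ_pos])))
  filter_upwards [hnear, self_mem_nhdsWithin] with u hu (huα : u < α)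
  rw [max_lt_iff] at hu
  have he : 0 < α - u := sub_pos.2 huα
  refine h.kineticInv_le (by positivity) (P.pos u hu.1 huα).le ?_
  calc V u ≤ P.a₂ * Phi φ |u - α| :=
        P.le_right u (by linarith [min_le_right d P.δ]) huα.le
    _ = P.a₂ * Phi φ (α - u) := by rw [abs_sub_comm, abs_of_pos he]
    _ ≤ kinetic φ (C * (α - u)) := hkin _ he (by linarith [min_le_left d P.δ])

lemma hasDerivAt_travelTime (P : PotentialData φ V α) (h : GrowthData φ) {u : ℝ}
    (hu : u ∈ Ioo (-α) α) :
    HasDerivAt (travelTime φ V) (speed φ V u)⁻¹ u := by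
  have h0 : (0:ℝ) ∈ Ioo (-α) α := ⟨by linarith [P.α_pos], P.α_pos⟩
  exact intervalIntegral.integral_hasDerivAt_right
    ((P.continuousOn_inv_speed h).mono (ordConnected_Ioo.uIcc_subset h0 hu)).intervalIntegrable
    ((P.continuousOn_inv_speed h).stronglyMeasurableAtFilter isOpen_Ioo u hu)
    ((P.continuousOn_inv_speed h).continuousAt (isOpen_Ioo.mem_nhds hu))

lemma continuousOn_travelTime (P : PotentialData φ V α) (h : GrowthData φ) :
    ContinuousOn (travelTime φ V) (Ioo (-α) α) := fun _ hu =>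
  (P.hasDerivAt_travelTime h hu).continuousAt.continuousWithinAt

lemma strictMonoOn_travelTime (P : PotentialData φ V α) (h : GrowthData φ) :
    StrictMonoOn (travelTime φ V) (Ioo (-α) α) :=
  strictMonoOn_of_deriv_pos (convex_Ioo _ _) (P.continuousOn_travelTime h) fun u hu => by
    rw [interior_Ioo] at hu
    rw [(P.hasDerivAt_travelTime h hu).deriv]
    exact inv_pos.2 (P.speed_pos h hu)

lemma le_travelTime_of_speed_le (P : PotentialData φ V α) (h : GrowthData φ) {C b : ℝ}
    (hb : -α < b) (hspeed : ∀ v ∈ Ico b α, speed φ V v ≤ C * (α - v)) {u : ℝ}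
    (hu : u ∈ Ico b α) :
    travelTime φ V b + C⁻¹ * (log (α - b) - log (α - u)) ≤ travelTime φ V u := by
  have hsub : Icc b u ⊆ Ioo (-α) α := fun v hv => ⟨hb.trans_le hv.1, hv.2.trans_lt hu.2⟩
  have hpos : ∀ v ∈ Icc b u, α - v ≠ 0 := fun v hv => (sub_pos.2 (hsub hv).2).ne'
  have key := le_of_hasDerivAt_nonneg (f := fun v => travelTime φ V v + C⁻¹ * log (α - v))
    (f' := fun v => (speed φ V v)⁻¹ + C⁻¹ * (-1 / (α - v))) hu.1
    ((P.continuousOn_travelTime h).mono hsub |>.add <| continuousOn_const.mul <|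
      ContinuousOn.log (by fun_prop) hpos)
    (fun v hv => (P.hasDerivAt_travelTime h (hsub (Ioo_subset_Icc_self hv))).add
      ((((hasDerivAt_id v).const_sub α).log (hpos v (Ioo_subset_Icc_self hv))).const_mul _))
    fun v hv => by
      have hv' := hsub (Ioo_subset_Icc_self hv)
      have hle : (C * (α - v))⁻¹ ≤ (speed φ V v)⁻¹ :=
        inv_anti₀ (P.speed_pos h hv') (hspeed v ⟨hv.1.le, hv'.2⟩)
      rw [mul_inv] at hle
      have : C⁻¹ * (-1 / (α - v)) = -(C⁻¹ * (α - v)⁻¹) := by ring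
      linarith
  linarith

lemma tendsto_travelTime_nhdsLT (P : PotentialData φ V α) (h : GrowthData φ) :
    Tendsto (travelTime φ V) (𝓝[<] α) atTop := by
  obtain ⟨C, hC, hev⟩ := P.eventually_speed_le h
  obtain ⟨b, hb, hsub⟩ := mem_nhdsLT_iff_exists_Ico_subset.1 hev
  set b' := max b 0
  have hb' : b' < α := max_lt hb P.α_pos
  have hspeed : ∀ v ∈ Ico b' α, speed φ V v ≤ C * (α - v) :=
    fun v hv => hsub ⟨(le_max_left _ _).trans hv.1, hv.2⟩
  have hlog : Tendsto (fun u => -log (α - u)) (𝓝[<] α) atTop := by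
    refine tendsto_neg_atBot_atTop.comp (tendsto_log_nhdsGT_zero.comp ?_)
    have := ((continuous_const.sub continuous_id).tendsto' α 0 (sub_self α)).mono_left
      (nhdsWithin_le_nhds (s := Iio α))
    exact tendsto_nhdsWithin_iff.2
      ⟨this, eventually_mem_nhdsWithin.mono fun u hu => mem_Ioi.2 (sub_pos.2 hu)⟩
  refine tendsto_atTop_mono' _ ?_ (tendsto_atTop_add_const_left _ (travelTime φ V b')
    ((tendsto_atTop_add_const_left _ (log (α - b')) hlog).const_mul_atTop (inv_pos.2 hC)))
  filter_upwards [Ico_mem_nhdsLT hb'] with u hu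
  have := P.le_travelTime_of_speed_le h (by linarith [le_max_right b 0, P.α_pos]) hspeed hu
  simp only [sub_eq_add_neg] at this ⊢
  linarith

lemma tendsto_travelTime_nhdsGT (P : PotentialData φ V α) (h : GrowthData φ) :
    Tendsto (travelTime φ V) (𝓝[>] (-α)) atBot := by
  have := tendsto_neg_atTop_atBot.comp
    ((P.compNeg.tendsto_travelTime_nhdsLT h).comp tendsto_neg_nhdsGT_neg)
  simpa [comp_def, travelTime_comp_neg] using this

lemma exists_travelTime_eq (P : PotentialData φ V α) (h : GrowthData φ) (t : ℝ) :
    ∃ u ∈ Ioo (-α) α, travelTime φ V u = t := by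
  have hα : -α < α := by linarith [P.α_pos]
  have h₁ : ∀ᶠ u in 𝓝[>] (-α), u ∈ Ioo (-α) α := Ioo_mem_nhdsGT hα
  have h₂ : ∀ᶠ u in 𝓝[<] α, u ∈ Ioo (-α) α := Ioo_mem_nhdsLT hα
  obtain ⟨u₁, hu₁, hu₁t⟩ :=
    (h₁.and ((P.tendsto_travelTime_nhdsGT h).eventually (eventually_le_atBot t))).exists
  obtain ⟨u₂, hu₂, hu₂t⟩ :=
    (h₂.and ((P.tendsto_travelTime_nhdsLT h).eventually (eventually_ge_atTop t))).exists
  have hsub := ordConnected_Ioo.uIcc_subset hu₁ hu₂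
  obtain ⟨u, hu, hut⟩ := intermediate_value_uIcc ((P.continuousOn_travelTime h).mono hsub)
    (mem_uIcc.2 (Or.inl ⟨hu₁t, hu₂t⟩))
  exact ⟨u, hsub hu, hut⟩

lemma orbit_spec (P : PotentialData φ V α) (h : GrowthData φ) (t : ℝ) :
    orbit φ V α t ∈ Ioo (-α) α ∧ travelTime φ V (orbit φ V α t) = t :=
  invFunOn_pos (P.exists_travelTime_eq h t)

lemma orbit_travelTime (P : PotentialData φ V α) (h : GrowthData φ) {u : ℝ}
    (hu : u ∈ Ioo (-α) α) : orbit φ V α (travelTime φ V u) = u :=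
  (P.strictMonoOn_travelTime h).injOn.leftInvOn_invFunOn hu

lemma orbit_zero (P : PotentialData φ V α) (h : GrowthData φ) : orbit φ V α 0 = 0 := by
  simpa [travelTime_zero] using P.orbit_travelTime h ⟨by linarith [P.α_pos], P.α_pos⟩

lemma monotone_orbit (P : PotentialData φ V α) (h : GrowthData φ) : Monotone (orbit φ V α) :=
  fun t₁ t₂ ht => by
    rwa [← (P.strictMonoOn_travelTime h).le_iff_le (P.orbit_spec h t₁).1 (P.orbit_spec h t₂).1,
      (P.orbit_spec h t₁).2, (P.orbit_spec h t₂).2]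

lemma range_orbit (P : PotentialData φ V α) (h : GrowthData φ) :
    range (orbit φ V α) = Ioo (-α) α :=
  (range_subset_iff.2 fun t => (P.orbit_spec h t).1).antisymm fun u hu =>
    ⟨travelTime φ V u, P.orbit_travelTime h hu⟩

lemma hasDerivAt_orbit (P : PotentialData φ V α) (h : GrowthData φ) (t : ℝ) :
    HasDerivAt (orbit φ V α) (speed φ V (orbit φ V α t)) t := by
  have hcont : ContinuousAt (orbit φ V α) t :=
    (P.strictMonoOn_travelTime h).continuousAt_of_rightInvOn isOpen_Ioo isOpen_univ
      (mapsTo_univ _ _) (fun t _ => (P.orbit_spec h t).1) (fun t _ => (P.orbit_spec h t).2)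
      (mem_univ t)
  simpa using HasDerivAt.of_local_left_inverse hcont
    (P.hasDerivAt_travelTime h (P.orbit_spec h t).1)
    (inv_ne_zero (P.speed_pos h (P.orbit_spec h t).1).ne')
    (Eventually.of_forall fun t => (P.orbit_spec h t).2)

lemma hasDerivAt_speed_orbit (P : PotentialData φ V α) (h : GrowthData φ) (t : ℝ) :
    HasDerivAt (fun s => speed φ V (orbit φ V α s))
      ((deriv (fun s => φ s * s) (speed φ V (orbit φ V α t)) * speed φ V (orbit φ V α t))⁻¹ *
        deriv V (orbit φ V α t) * speed φ V (orbit φ V α t)) t :=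
  (P.hasDerivAt_speed h (P.orbit_spec h t).1).comp t (P.hasDerivAt_orbit h t)

theorem isHeteroclinic_orbit (P : PotentialData φ V α) (h : GrowthData φ) :
    IsHeteroclinic φ V α (orbit φ V α) := by
  have hderiv : deriv (orbit φ V α) = fun t => speed φ V (orbit φ V α t) :=
    funext fun t => (P.hasDerivAt_orbit h t).deriv
  refine ⟨⟨fun t => (P.hasDerivAt_orbit h t).differentiableAt, fun t => ?_⟩,
    hderiv ▸ fun t => (P.hasDerivAt_speed_orbit h t).differentiableAt,
    hderiv ▸ continuous_iff_continuousAt.2 fun t => (P.hasDerivAt_speed_orbit h t).continuousAt,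
    P.orbit_zero h,
    tendsto_atTop_isLUB (P.monotone_orbit h) (P.range_orbit h ▸ isLUB_Ioo (by linarith [P.α_pos])),
    tendsto_atBot_isGLB (P.monotone_orbit h) (P.range_orbit h ▸ isGLB_Ioo (by linarith [P.α_pos]))⟩
  simp only [hderiv, flux_eq_ite]
  have hg := P.speed_pos h (P.orbit_spec h t).1
  have hD := h.deriv_pos hg
  refine ((h.hasDerivAt_flux hg).comp t (P.hasDerivAt_speed_orbit h t)).congr_deriv ?_
  generalize deriv (fun s => φ s * s) (speed φ V (orbit φ V α t)) = D at hD ⊢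
  field_simp

end PotentialData

lemma hasDerivAt_flux_deriv {q : ℝ → ℝ} (hq : IsClassicalSolution φ V q) (t : ℝ) :
    HasDerivAt (fun s => flux φ (deriv q s)) (deriv V (q t)) t := by
  simpa only [flux_eq_ite] using hq.2 t

lemma exists_kinetic_deriv_eq_add (h : GrowthData φ) (hV : Differentiable ℝ V)
    {q : ℝ → ℝ} (hq : IsClassicalSolution φ V q) (hq' : Differentiable ℝ (deriv q)) :
    ∃ e, ∀ t, kinetic φ (deriv q t) = e + V (q t) := by
  have hE : ∀ t, HasDerivAt (fun s => kinetic φ (deriv q s) - V (q s)) 0 t := fun t =>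
    ((((hasDerivAt_flux_deriv hq t).mul (hq' t).hasDerivAt).sub
      ((h.hasDerivAt_Phi _).comp t (hq' t).hasDerivAt)).sub
      ((hV (q t)).hasDerivAt.comp t (hq.1 t).hasDerivAt)).congr_deriv (by ring)
  refine ⟨kinetic φ (deriv q 0) - V (q 0), fun t => ?_⟩
  have := is_const_of_deriv_eq_zero (fun s => (hE s).differentiableAt) (fun s => (hE s).deriv) t 0
  linarith

lemma kinetic_deriv_eq (h : GrowthData φ) (hV : ContDiff ℝ 1 V) (hVα : V α = 0)
    {q : ℝ → ℝ} (hq : IsHeteroclinic φ V α q) (t : ℝ) : kinetic φ (deriv q t) = V (q t) := by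
  obtain ⟨hcl, hq', -, -, htop, -⟩ := hq
  obtain ⟨e, he⟩ := exists_kinetic_deriv_eq_add h (hV.differentiable one_ne_zero) hcl hq'
  obtain ⟨ξ, hξ, hderiv⟩ := exists_seq_tendsto_deriv_zero hcl.1 htop
  have hlim : Tendsto (fun n => kinetic φ (deriv q (ξ n)) - V (q (ξ n))) atTop
      (𝓝 (kinetic φ 0 - V α)) :=
    ((h.continuous_kinetic.tendsto 0).comp hderiv).sub
      ((hV.continuous.tendsto α).comp (htop.comp hξ))
  have hconst : (fun n => kinetic φ (deriv q (ξ n)) - V (q (ξ n))) = fun _ => e :=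
    funext fun n => by rw [he]; ring
  rw [hconst, kinetic_zero, hVα, sub_zero] at hlim
  rw [he, tendsto_nhds_unique tendsto_const_nhds hlim, zero_add]

namespace PotentialData

lemma mem_Ioo_of_tendsto (P : PotentialData φ V α) (h : GrowthData φ) {f : ℝ → ℝ}
    {l : Filter ℝ} [l.NeBot] {x M : ℝ} (hf : Tendsto f l (𝓝 x))
    (hin : ∀ᶠ s in l, f s ∈ Ioo (-α) α) (hM : ∀ᶠ s in l, |travelTime φ V (f s)| ≤ M) :
    x ∈ Ioo (-α) α := by
  have hge : -α ≤ x := ge_of_tendsto hf (hin.mono fun _ hs => hs.1.le)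
  have hle : x ≤ α := le_of_tendsto hf (hin.mono fun _ hs => hs.2.le)
  refine ⟨hge.lt_of_ne fun hx => ?_, hle.lt_of_ne fun hx => ?_⟩
  · have hlim : Tendsto f l (𝓝[>] (-α)) :=
      tendsto_nhdsWithin_iff.2 ⟨hx ▸ hf, hin.mono fun _ hs => hs.1⟩
    obtain ⟨s, hs, hsM⟩ := ((((P.tendsto_travelTime_nhdsGT h).comp hlim).eventually
      (eventually_lt_atBot (-M))).and hM).exists
    linarith [neg_abs_le (travelTime φ V (f s)), show travelTime φ V (f s) < -M from hs]
  · have hlim : Tendsto f l (𝓝[<] α) :=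
      tendsto_nhdsWithin_iff.2 ⟨hx ▸ hf, hin.mono fun _ hs => hs.2⟩
    obtain ⟨s, hs, hsM⟩ := ((((P.tendsto_travelTime_nhdsLT h).comp hlim).eventually
      (eventually_gt_atTop M)).and hM).exists
    linarith [le_abs_self (travelTime φ V (f s)), show M < travelTime φ V (f s) from hs]

lemma abs_travelTime_le (P : PotentialData φ V α) (h : GrowthData φ) {q : ℝ → ℝ}
    (hq : Differentiable ℝ q) (hq0 : q 0 = 0) (hspeed : ∀ t, |deriv q t| = speed φ V (q t))
    {s : ℝ} (hs : 0 ≤ s) (hin : ∀ t ∈ Icc 0 s, q t ∈ Ioo (-α) α) :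
    |travelTime φ V (q s)| ≤ s := by
  have key := norm_image_sub_le_of_norm_deriv_le_segment' (f := fun t => travelTime φ V (q t))
    (f' := fun t => (speed φ V (q t))⁻¹ * deriv q t) (C := 1)
    (fun t ht => ((P.hasDerivAt_travelTime h (hin t ht)).comp t (hq t).hasDerivAt).hasDerivWithinAt)
    (fun t ht => by
      have hpos := P.speed_pos h (hin t (Ico_subset_Icc_self ht))
      rw [norm_mul, norm_inv, Real.norm_eq_abs, Real.norm_eq_abs, hspeed, abs_of_pos hpos,
        inv_mul_cancel₀ hpos.ne'])
    s ⟨hs, le_rfl⟩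
  simpa [hq0, travelTime_zero] using key

lemma mem_Ioo_of_nonneg (P : PotentialData φ V α) (h : GrowthData φ) {q : ℝ → ℝ}
    (hq : Differentiable ℝ q) (hq0 : q 0 = 0) (hspeed : ∀ t, |deriv q t| = speed φ V (q t))
    {t : ℝ} (ht : 0 ≤ t) : q t ∈ Ioo (-α) α := by
  -- At the first exit time `sInf S` the travel time along `q` would have to blow up.
  by_contra hout
  set S := {s | 0 ≤ s ∧ q s ∉ Ioo (-α) α}
  have hS : IsClosed S := isClosed_Ici.inter (isOpen_Ioo.preimage hq.continuous).isClosed_compl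
  have hbdd : BddBelow S := ⟨0, fun _ hs => hs.1⟩
  obtain ⟨hs₀, hout₀⟩ : sInf S ∈ S := hS.csInf_mem ⟨t, ht, hout⟩ hbdd
  have hin : ∀ s ∈ Ico 0 (sInf S), q s ∈ Ioo (-α) α := fun s hs =>
    by_contra fun hqs => hs.2.not_ge (csInf_le hbdd ⟨hs.1, hqs⟩)
  have hq0' : q 0 ∈ Ioo (-α) α := by rw [hq0]; exact ⟨by linarith [P.α_pos], P.α_pos⟩
  have hpos : 0 < sInf S := hs₀.lt_of_ne fun h0 => hout₀ (h0 ▸ hq0')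
  refine hout₀ (P.mem_Ioo_of_tendsto h (l := 𝓝[<] sInf S) (M := sInf S)
    (hq.continuous.continuousAt.tendsto.mono_left nhdsWithin_le_nhds) ?_ ?_)
  · filter_upwards [Ico_mem_nhdsLT hpos] with s hs using hin s hs
  · filter_upwards [Ico_mem_nhdsLT hpos] with s hs
    exact (P.abs_travelTime_le h hq hq0 hspeed hs.1 fun u hu =>
      hin u ⟨hu.1, hu.2.trans_lt hs.2⟩).trans hs.2.le

lemma mem_Ioo (P : PotentialData φ V α) (h : GrowthData φ) {q : ℝ → ℝ}
    (hq : Differentiable ℝ q) (hq0 : q 0 = 0) (hspeed : ∀ t, |deriv q t| = speed φ V (q t))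
    (t : ℝ) : q t ∈ Ioo (-α) α := by
  rcases le_total 0 t with ht | ht
  · exact P.mem_Ioo_of_nonneg h hq hq0 hspeed ht
  · simpa using P.mem_Ioo_of_nonneg h (q := fun s => q (-s)) (hq.comp differentiable_neg)
      (by simpa using hq0) (fun s => by rw [deriv_comp_neg, abs_neg]; exact hspeed _)
      (neg_nonneg.2 ht)

theorem eq_orbit_of_isHeteroclinic (P : PotentialData φ V α) (h : GrowthData φ) (hVα : V α = 0)
    {q : ℝ → ℝ} (hq : IsHeteroclinic φ V α q) : q = orbit φ V α := by
  have hspeed (t : ℝ) : |deriv q t| = speed φ V (q t) := by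
    rw [speed, ← kinetic_deriv_eq h P.contDiff hVα hq t, ← kinetic_abs,
      h.kineticInv_kinetic (abs_nonneg _)]
  obtain ⟨⟨hdiff, -⟩, -, hq'cont, hq0, htop, -⟩ := hq
  have hin := P.mem_Ioo h hdiff hq0 hspeed
  have hpos := deriv_pos_of_forall_ne_zero P.α_pos hdiff hq'cont hq0 htop fun t h0 =>
    (P.speed_pos h (hin t)).ne' (by rw [← hspeed t, h0, abs_zero])
  have htime (t : ℝ) : HasDerivAt (fun s => travelTime φ V (q s) - s) 0 t :=
    (((P.hasDerivAt_travelTime h (hin t)).comp t (hdiff t).hasDerivAt).sub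
      (hasDerivAt_id t)).congr_deriv
      (by rw [← hspeed t, abs_of_pos (hpos t), inv_mul_cancel₀ (hpos t).ne', sub_self])
  funext t
  have := is_const_of_deriv_eq_zero (fun s => (htime s).differentiableAt)
    (fun s => (htime s).deriv) t 0
  rw [← P.orbit_travelTime h (hin t)]
  congr 1
  simpa [hq0, travelTime_zero, sub_eq_zero] using this

end PotentialData

end PhiLaplacian

theorem statement0_general (φ V : ℝ → ℝ) (l m α : ℝ)
    (hφC1 : ContDiffOn ℝ 1 φ (Set.Ioi 0))
    (hφpos : ∀ t > 0, 0 < φ t)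
    (hl : 1 < l)
    (hφ2 : ∀ t > 0, l - 1 ≤ deriv (fun s => φ s * s) t / φ t ∧
      deriv (fun s => φ s * s) t / φ t ≤ m - 1)
    (hφ3 : ∃ c₁ c₂ δ₀ r : ℝ, 0 < c₁ ∧ 0 < c₂ ∧ 0 < δ₀ ∧ 1 < r ∧
      ∀ t : ℝ, 0 < t → t ≤ δ₀ → c₁ * t ^ (r - 1) ≤ φ t * t ∧ φ t * t ≤ c₂ * t ^ (r - 1))
    (hα : 0 < α)
    (hV1 : ContDiff ℝ 1 V)
    (hV2 : V α = 0 ∧ V (-α) = 0 ∧ ∀ t, -α < t → t < α → 0 < V t)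
    (hV3 : ∃ a₁ a₂ a₃ a₄ δ : ℝ, 0 < a₁ ∧ 0 < a₂ ∧ 0 < a₃ ∧ 0 < a₄ ∧ 0 < δ ∧ δ < α ∧
      (∀ t, α - δ < t → t ≤ α → a₁ * Phi φ |t - α| ≤ V t ∧ V t ≤ a₂ * Phi φ |t - α|) ∧
      (∀ t, -α ≤ t → t < -α + δ → a₃ * Phi φ |t + α| ≤ V t ∧ V t ≤ a₄ * Phi φ |t + α|))
    : ∃! q : ℝ → ℝ, IsHeteroclinic φ V α q := by
  obtain ⟨c₁, c₂, δ₀, r, hc₁, hc₂, hδ₀, hr, hbounds⟩ := hφ3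
  obtain ⟨_, a₂, _, a₄, δ, _, ha₂, _, ha₄, hδ, _, hright, hleft⟩ := hV3
  let h : PhiLaplacian.GrowthData φ :=
    ⟨l, c₁, c₂, δ₀, r, hφC1, hφpos, hl, fun t ht => (hφ2 t ht).1, hc₁, hc₂, hδ₀, hr, hbounds⟩
  let P : PhiLaplacian.PotentialData φ V α :=
    ⟨a₂, a₄, δ, hα, hV1, hV2.2.2, ha₂, ha₄, hδ, fun t h₁ h₂ => (hright t h₁ h₂).2,
      fun t h₁ h₂ => (hleft t h₁ h₂).2⟩
  exact ⟨_, P.isHeteroclinic_orbit h, fun q hq => P.eq_orbit_of_isHeteroclinic h hV2.1 hq⟩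

theorem statement0 (φ V : ℝ → ℝ) (l m α : ℝ)
    (hφC1 : ContDiffOn ℝ 1 φ (Set.Ioi 0))
    (hφpos : ∀ t > 0, 0 < φ t)
    (hφ1 : ∀ t > 0, 0 < deriv (fun s => φ s * s) t)
    (hl : 1 < l) (hlm : l ≤ m)
    (hφ2 : ∀ t > 0, l - 1 ≤ deriv (fun s => φ s * s) t / φ t ∧
      deriv (fun s => φ s * s) t / φ t ≤ m - 1)
    (hφ3 : ∃ c₁ c₂ δ₀ r : ℝ, 0 < c₁ ∧ 0 < c₂ ∧ 0 < δ₀ ∧ 1 < r ∧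
      ∀ t : ℝ, 0 < t → t ≤ δ₀ → c₁ * t ^ (r - 1) ≤ φ t * t ∧ φ t * t ≤ c₂ * t ^ (r - 1))
    (hα : 0 < α)
    (hV1 : ContDiff ℝ 1 V) (hVnn : ∀ t, 0 ≤ V t)
    (hV2 : V α = 0 ∧ V (-α) = 0 ∧ ∀ t, -α < t → t < α → 0 < V t)
    (hV3 : ∃ a₁ a₂ a₃ a₄ δ : ℝ, 0 < a₁ ∧ 0 < a₂ ∧ 0 < a₃ ∧ 0 < a₄ ∧ 0 < δ ∧ δ < α ∧
      (∀ t, α - δ < t → t ≤ α → a₁ * Phi φ |t - α| ≤ V t ∧ V t ≤ a₂ * Phi φ |t - α|) ∧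
      (∀ t, -α ≤ t → t < -α + δ → a₃ * Phi φ |t + α| ≤ V t ∧ V t ≤ a₄ * Phi φ |t + α|))
    (hV4 : ∃ k₁ k₂ k₃ k₄ k₅ k₆ k₇ k₈ : ℝ, 0 < k₁ ∧ 0 < k₂ ∧ 0 < k₃ ∧ 0 < k₄ ∧
      0 < k₅ ∧ 0 < k₆ ∧ 0 < k₇ ∧ 0 < k₈ ∧
      (∀ t, 0 ≤ t → t ≤ α →
        -(k₃ * t * φ (k₄ * |t - α|) * |t - α|) ≤ deriv V t ∧
        deriv V t ≤ -(k₁ * t * φ (k₂ * |t - α|) * |t - α|)) ∧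
      (∀ t, -α ≤ t → t ≤ 0 →
        -(k₇ * t * φ (k₈ * |t + α|) * |t + α|) ≤ deriv V t ∧
        deriv V t ≤ -(k₅ * t * φ (k₆ * |t + α|) * |t + α|)))
    (hV5 : ∃ ρ > 0, StrictConvexOn ℝ (Set.Ioo (-α - ρ) (-α + ρ)) V ∧
      StrictConvexOn ℝ (Set.Ioo (α - ρ) (α + ρ)) V)
    : ∃! q : ℝ → ℝ, IsHeteroclinic φ V α q :=
  statement0_general φ V l m α hφC1 hφpos hl hφ2 hφ3 hα hV1 hV2 hV3
end

section
/- Assume (φ1)–(φ4) and (V1)–(V5), and let q be a heteroclinic solution of problem (P). Then there exist constants θ₁, θ₂, θ₃, θ₄ > 0 such that 0 < α − q(t) ≤ θ₁ e^{−θ₂ t} for all t ≥ 0 and 0 < α + q(t) ≤ θ₃ e^{θ₄ t} for all t ≤ 0. -/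
open Real Filter Set MeasureTheory

/-!
Multiplying the equation by `q'` shows that `PhiStar φ q' - V q` is constant along `q`; since `q`
converges at `+∞`, `q'` is small at arbitrarily late times, so the constant is `0`.
Near `α`, hypotheses (φ3) and (V3) make both `Φ(w)` and `PhiStar φ s` comparable to `w ^ r`
and `|s| ^ r`, so the identity `PhiStar φ q' = V q` gives `|q'| ≍ α - q`. The upper bound
`|q'| ≤ C (α - q)` is a Gronwall inequality that keeps `q` from reaching `α` in finite time, and the
lower bound `α - q ≤ C q'` then forces exponential convergence. The behaviour at `-∞` follows by
applying this to `t ↦ -q (-t)` with the potential `x ↦ V (-x)`.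
-/

open scoped Topology

/-- `Φ*(φ(|s|) s)`, the Legendre conjugate of `Φ` at the momentum `φ(|s|) s`. -/
noncomputable def PhiStar (φ : ℝ → ℝ) (s : ℝ) : ℝ := φ |s| * s ^ 2 - Phi φ s

section Phi

variable {φ : ℝ → ℝ}

@[simp] lemma Phi_zero : Phi φ 0 = 0 := by simp [Phi]

@[simp] lemma Phi_neg (t : ℝ) : Phi φ (-t) = Phi φ t := by simp [Phi]

@[simp] lemma PhiStar_zero : PhiStar φ 0 = 0 := by simp [PhiStar]

@[simp] lemma PhiStar_neg (s : ℝ) : PhiStar φ (-s) = PhiStar φ s := by simp [PhiStar]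

lemma continuous_mul_comp_abs (hc : ContinuousOn φ (Ici 0)) :
    Continuous fun s : ℝ => s * φ |s| :=
  continuous_id.mul (hc.comp_continuous continuous_abs abs_nonneg)

lemma Phi_eq_integral (φ : ℝ → ℝ) (t : ℝ) : Phi φ t = ∫ s in (0:ℝ)..t, s * φ |s| := by
  have hnonneg : ∀ x, 0 ≤ x → Phi φ x = ∫ s in (0:ℝ)..x, s * φ |s| := fun x hx => by
    rw [Phi, abs_of_nonneg hx]
    refine intervalIntegral.integral_congr fun s hs => ?_
    rw [uIcc_of_le hx] at hs
    simp [abs_of_nonneg hs.1]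
  rcases le_total 0 t with ht | ht
  · exact hnonneg t ht
  · -- the integrand is odd, so its primitive from `0` is even
    have hodd := intervalIntegral.integral_comp_neg (a := 0) (b := t) fun s => s * φ |s|
    simp only [neg_mul, abs_neg, intervalIntegral.integral_neg, neg_zero] at hodd
    rw [← Phi_neg, hnonneg _ (neg_nonneg.2 ht), intervalIntegral.integral_symm, ← hodd, neg_neg]

lemma hasDerivAt_Phi (hc : ContinuousOn φ (Ici 0)) (t : ℝ) :
    HasDerivAt (Phi φ) (t * φ |t|) t := by
  rw [funext (Phi_eq_integral φ)]
  exact ((continuous_mul_comp_abs hc).integral_hasStrictDerivAt 0 t).hasDerivAt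

lemma continuous_Phi (hc : ContinuousOn φ (Ici 0)) : Continuous (Phi φ) :=
  continuous_iff_continuousAt.2 fun t => (hasDerivAt_Phi hc t).continuousAt

lemma continuous_PhiStar (hc : ContinuousOn φ (Ici 0)) : Continuous (PhiStar φ) :=
  ((hc.comp_continuous continuous_abs abs_nonneg).mul (continuous_pow 2)).sub (continuous_Phi hc)

lemma Phi_nonneg (hp : ∀ t > 0, 0 < φ t) (t : ℝ) : 0 ≤ Phi φ t := by
  refine intervalIntegral.integral_nonneg (abs_nonneg t) fun s hs => ?_
  rcases hs.1.eq_or_lt with h | h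
  · simp [← h]
  · exact (mul_pos h (hp s h)).le

lemma Phi_le (hc : ContinuousOn φ (Ici 0)) (hm : MonotoneOn φ (Ici 0)) (t : ℝ) :
    Phi φ t ≤ φ |t| * t ^ 2 / 2 := by
  have hle : Phi φ t ≤ ∫ s in (0:ℝ)..|t|, s * φ |t| := by
    refine intervalIntegral.integral_mono_on (abs_nonneg t) ?_
      (intervalIntegral.intervalIntegrable_id.mul_const _) fun s hs => ?_
    · refine (continuousOn_id.mul (hc.mono ?_)).intervalIntegrable
      rw [uIcc_of_le (abs_nonneg t)]
      exact Icc_subset_Ici_self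
    · exact mul_le_mul_of_nonneg_left (hm hs.1 (abs_nonneg t) hs.2) hs.1
  rwa [intervalIntegral.integral_mul_const, integral_id, sq_abs, zero_pow two_ne_zero, sub_zero,
    div_mul_eq_mul_div, mul_comm] at hle

end Phi

lemma le_div_rpow_inv_mul_of_mul_rpow_le {a b r x y : ℝ} (hx : 0 ≤ x) (hy : 0 ≤ y) (ha : 0 < a)
    (hb : 0 ≤ b) (hr : 0 < r) (h : a * x ^ r ≤ b * y ^ r) : x ≤ (b / a) ^ r⁻¹ * y := by
  have hba : 0 ≤ b / a := div_nonneg hb ha.le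
  rw [← rpow_le_rpow_iff hx (by positivity) hr, mul_rpow (by positivity) hy,
    rpow_inv_rpow hba hr.ne', div_mul_eq_mul_div, le_div_iff₀ ha, mul_comm]
  exact h

section PowerLike

def IsPowerLikeAtZero (φ : ℝ → ℝ) (c₁ c₂ δ₀ r : ℝ) : Prop :=
  ∀ t, 0 < t → t ≤ δ₀ → c₁ * t ^ (r - 1) ≤ φ t * t ∧ φ t * t ≤ c₂ * t ^ (r - 1)

variable {φ : ℝ → ℝ} {c₁ c₂ δ₀ r : ℝ}

lemma Phi_rpow_bounds (hφr : IsPowerLikeAtZero φ c₁ c₂ δ₀ r) (hc : ContinuousOn φ (Ici 0))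
    (hr : 0 < r) {w : ℝ} (hw₀ : 0 ≤ w) (hw : w ≤ δ₀) :
    c₁ * w ^ r / r ≤ Phi φ w ∧ Phi φ w ≤ c₂ * w ^ r / r := by
  have hint : ∀ c : ℝ, ∫ s in (0:ℝ)..w, c * s ^ (r - 1) = c * w ^ r / r := fun c => by
    rw [intervalIntegral.integral_const_mul, integral_rpow (Or.inl (by linarith)),
      sub_add_cancel, zero_rpow hr.ne', sub_zero, mul_div_assoc]
  have hpow : ∀ c : ℝ, IntervalIntegrable (fun s : ℝ => c * s ^ (r - 1)) volume 0 w := fun c =>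
    (intervalIntegral.intervalIntegrable_rpow' (by linarith)).const_mul c
  have hmul : IntervalIntegrable (fun s : ℝ => s * φ |s|) volume 0 w :=
    (continuous_mul_comp_abs hc).intervalIntegrable 0 w
  rw [Phi_eq_integral, ← hint, ← hint]
  constructor
  · refine intervalIntegral.integral_mono_on_of_le_Ioo hw₀ (hpow c₁) hmul fun s hs => ?_
    rw [abs_of_pos hs.1, mul_comm s]
    exact (hφr s hs.1 (hs.2.le.trans hw)).1
  · refine intervalIntegral.integral_mono_on_of_le_Ioo hw₀ hmul (hpow c₂) fun s hs => ?_
    rw [abs_of_pos hs.1, mul_comm s]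
    exact (hφr s hs.1 (hs.2.le.trans hw)).2

lemma mul_sq_rpow_bounds (hφr : IsPowerLikeAtZero φ c₁ c₂ δ₀ r) (hr : 0 < r) {s : ℝ}
    (hs : |s| ≤ δ₀) :
    c₁ * |s| ^ r ≤ φ |s| * s ^ 2 ∧ φ |s| * s ^ 2 ≤ c₂ * |s| ^ r := by
  rcases (abs_nonneg s).eq_or_lt with h | h
  · simp [abs_eq_zero.1 h.symm, zero_rpow hr.ne']
  · have hsplit : ∀ c : ℝ, c * |s| ^ r = c * |s| ^ (r - 1) * |s| := fun c => by
      rw [mul_assoc, ← rpow_add_one h.ne', sub_add_cancel]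
    rw [hsplit, hsplit, ← sq_abs, sq, ← mul_assoc]
    obtain ⟨hlo, hhi⟩ := hφr |s| h hs
    exact ⟨mul_le_mul_of_nonneg_right hlo h.le, mul_le_mul_of_nonneg_right hhi h.le⟩

lemma PhiStar_bounds (hc : ContinuousOn φ (Ici 0)) (hm : MonotoneOn φ (Ici 0))
    (hp : ∀ t > 0, 0 < φ t) (s : ℝ) :
    φ |s| * s ^ 2 / 2 ≤ PhiStar φ s ∧ PhiStar φ s ≤ φ |s| * s ^ 2 := by
  have := Phi_le hc hm s
  have := Phi_nonneg hp s
  constructor <;> (unfold PhiStar; linarith)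

lemma PhiStar_rpow_bounds (hφr : IsPowerLikeAtZero φ c₁ c₂ δ₀ r) (hc : ContinuousOn φ (Ici 0))
    (hm : MonotoneOn φ (Ici 0)) (hp : ∀ t > 0, 0 < φ t) (hr : 0 < r) {s : ℝ} (hs : |s| ≤ δ₀) :
    c₁ * |s| ^ r / 2 ≤ PhiStar φ s ∧ PhiStar φ s ≤ c₂ * |s| ^ r := by
  have := mul_sq_rpow_bounds hφr hr hs
  have := PhiStar_bounds hc hm hp s
  constructor <;> linarith

lemma abs_lt_of_PhiStar_lt (hφr : IsPowerLikeAtZero φ c₁ c₂ δ₀ r) (hc : ContinuousOn φ (Ici 0))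
    (hm : MonotoneOn φ (Ici 0)) (hp : ∀ t > 0, 0 < φ t) (hr : 0 < r) (hδ₀ : 0 < δ₀) {s : ℝ}
    (h : PhiStar φ s < c₁ * δ₀ ^ r / 2) : |s| < δ₀ := by
  by_contra! hs
  have hδ₀s := (mul_sq_rpow_bounds hφr hr (s := δ₀) (abs_of_pos hδ₀).le).1
  rw [abs_of_pos hδ₀] at hδ₀s
  have hmono : φ δ₀ * δ₀ ^ 2 ≤ φ |s| * s ^ 2 := by
    rw [← sq_abs s]
    exact mul_le_mul (hm hδ₀.le (hδ₀.le.trans hs) hs) (by gcongr) (sq_nonneg _)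
      (hp _ (hδ₀.trans_le hs)).le
  linarith [(PhiStar_bounds hc hm hp s).1]

lemma exists_abs_le_and_le_abs_of_PhiStar_comparable (hφr : IsPowerLikeAtZero φ c₁ c₂ δ₀ r)
    (hc : ContinuousOn φ (Ici 0)) (hm : MonotoneOn φ (Ici 0)) (hp : ∀ t > 0, 0 < φ t)
    (hc₁ : 0 < c₁) (hc₂ : 0 < c₂) (hδ₀ : 0 < δ₀) (hr : 0 < r) {a₁ a₂ : ℝ} (ha₁ : 0 < a₁)
    (ha₂ : 0 < a₂) :
    ∃ ε > 0, ∃ C > 0, ∀ s w, 0 ≤ w → w < ε → a₁ * Phi φ w ≤ PhiStar φ s →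
      PhiStar φ s ≤ a₂ * Phi φ w → |s| ≤ C * w ∧ w ≤ C * |s| := by
  have hsmall : ∀ᶠ w in 𝓝 0, a₂ * Phi φ w < c₁ * δ₀ ^ r / 2 := by
    refine (((continuous_Phi hc).tendsto 0).const_mul a₂).eventually_lt_const ?_
    simpa using by positivity
  obtain ⟨ε, hε, hεsmall⟩ := Metric.eventually_nhds_iff.1 hsmall
  set C₁ := (a₂ * c₂ / r / (c₁ / 2)) ^ r⁻¹
  set C₂ := (c₂ / (a₁ * c₁ / r)) ^ r⁻¹
  refine ⟨min ε δ₀, lt_min hε hδ₀, max C₁ C₂, by positivity, fun s w hw₀ hw hlo hhi => ?_⟩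
  have hs : |s| < δ₀ := by
    refine abs_lt_of_PhiStar_lt hφr hc hm hp hr hδ₀ (hhi.trans_lt (hεsmall ?_))
    rw [dist_zero_right, norm_of_nonneg hw₀]
    exact hw.trans_le (min_le_left _ _)
  obtain ⟨hPhi_lo, hPhi_hi⟩ := Phi_rpow_bounds hφr hc hr hw₀ (hw.le.trans (min_le_right _ _))
  obtain ⟨hS_lo, hS_hi⟩ := PhiStar_rpow_bounds hφr hc hm hp hr hs.le
  constructor
  · have : |s| ≤ C₁ * w := by
      refine le_div_rpow_inv_mul_of_mul_rpow_le (abs_nonneg s) hw₀ (by positivity)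
        (by positivity) hr ?_
      calc c₁ / 2 * |s| ^ r ≤ a₂ * Phi φ w := by linarith
        _ ≤ a₂ * (c₂ * w ^ r / r) := by gcongr
        _ = a₂ * c₂ / r * w ^ r := by ring
    exact this.trans (mul_le_mul_of_nonneg_right (le_max_left _ _) hw₀)
  · have : w ≤ C₂ * |s| := by
      refine le_div_rpow_inv_mul_of_mul_rpow_le hw₀ (abs_nonneg s) (by positivity)
        hc₂.le hr ?_
      calc a₁ * c₁ / r * w ^ r = a₁ * (c₁ * w ^ r / r) := by ring
        _ ≤ a₁ * Phi φ w := by gcongr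
        _ ≤ c₂ * |s| ^ r := by linarith
    exact this.trans (mul_le_mul_of_nonneg_right (le_max_right _ _) (abs_nonneg s))

end PowerLike

section Calculus

lemma antitoneOn_mul_exp_of_deriv_le {w : ℝ → ℝ} {k : ℝ} {s : Set ℝ} (hw : Differentiable ℝ w)
    (hs : Convex ℝ s) (h : ∀ t ∈ interior s, deriv w t ≤ k * w t) :
    AntitoneOn (fun t => w t * exp (-(k * t))) s := by
  have hd : ∀ t, HasDerivAt (fun t => w t * exp (-(k * t)))
      ((deriv w t - k * w t) * exp (-(k * t))) t := fun t =>
    ((hw t).hasDerivAt.fun_mul ((hasDerivAt_id' t).const_mul k).fun_neg.exp).congr_deriv (by ring)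
  refine antitoneOn_of_deriv_nonpos hs (fun t _ => (hd t).continuousAt.continuousWithinAt)
    (fun t _ => (hd t).differentiableAt.differentiableWithinAt) fun t ht => ?_
  rw [(hd t).deriv]
  exact mul_nonpos_of_nonpos_of_nonneg (sub_nonpos.2 (h t ht)) (exp_pos _).le

lemma exists_first_le_of_continuous {f : ℝ → ℝ} (hf : Continuous f) {a b c : ℝ} (hab : a ≤ b)
    (ha : f a < c) (hb : c ≤ f b) : ∃ τ ∈ Ioc a b, c ≤ f τ ∧ ∀ t ∈ Ico a τ, f t < c := by
  set S := Icc a b ∩ {t | c ≤ f t}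
  have hbdd : BddBelow S := ⟨a, fun t ht => ht.1.1⟩
  obtain ⟨⟨haτ, hτb⟩, hτ⟩ : sInf S ∈ S :=
    (isClosed_Icc.inter (isClosed_le continuous_const hf)).csInf_mem ⟨b, ⟨hab, le_rfl⟩, hb⟩ hbdd
  refine ⟨sInf S, ⟨haτ.lt_of_ne ?_, hτb⟩, hτ, fun t ht => ?_⟩
  · rintro h
    rw [← h] at hτ
    exact hτ.not_gt ha
  · by_contra! hct
    exact (csInf_le hbdd ⟨⟨ht.1, ht.2.le.trans hτb⟩, hct⟩).not_gt ht.2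

lemma lt_of_abs_deriv_le_mul_sub {q : ℝ → ℝ} {α ε C a : ℝ} (hq : Differentiable ℝ q)
    (hε : 0 < ε) (h : ∀ t, α - ε < q t → q t < α → |deriv q t| ≤ C * (α - q t))
    (ha : q a < α) : ∀ t ≥ a, q t < α := by
  by_contra! ⟨b, hab, hb⟩
  obtain ⟨τ, ⟨haτ, -⟩, hτ, hbefore⟩ := exists_first_le_of_continuous hq.continuous hab ha hb
  obtain ⟨η, hη, hnear⟩ := Metric.eventually_nhds_iff.1
    ((hq.continuous.tendsto τ).eventually_const_lt (show α - ε < q τ by linarith))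
  set u := max a (τ - η / 2)
  have hu : u < τ := max_lt haτ (by linarith)
  -- on `[u, τ]` the gap `α - q` can shrink at most exponentially, so it cannot close at `τ`
  have hder : ∀ t ∈ interior (Icc u τ), deriv (fun t => q t - α) t ≤ -C * (q t - α) := by
    intro t ht
    rw [interior_Icc] at ht
    have hdist : dist t τ < η := by
      rw [dist_comm, dist_eq, abs_lt]
      constructor <;> linarith [le_max_right a (τ - η / 2), ht.1, ht.2]
    have := h t (hnear hdist) (hbefore t ⟨(le_max_left _ _).trans ht.1.le, ht.2⟩)
    rw [deriv_sub_const]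
    linarith [le_abs_self (deriv q t)]
  have hanti := antitoneOn_mul_exp_of_deriv_le (hq.sub_const α) (convex_Icc u τ) hder
    ⟨le_rfl, hu.le⟩ ⟨hu.le, le_rfl⟩ hu.le
  have hqu : q u < α := hbefore u ⟨le_max_left _ _, hu⟩
  have : 0 ≤ (q τ - α) * exp (-(-C * τ)) := mul_nonneg (by linarith) (exp_pos _).le
  nlinarith [exp_pos (-(-C * u))]

lemma exists_le_mul_exp_of_deriv_le {w : ℝ → ℝ} {k T : ℝ} (hw : Differentiable ℝ w) (hk : 0 ≤ k)
    (hT : 0 ≤ T) (h : ∀ t > T, deriv w t ≤ -k * w t) :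
    ∃ θ > 0, ∀ t ≥ 0, w t ≤ θ * exp (-k * t) := by
  obtain ⟨M, hM⟩ := (isCompact_Icc (a := 0) (b := T)).exists_bound_of_continuousOn
    hw.continuous.continuousOn
  have hbound : ∀ t ∈ Icc 0 T, w t ≤ max M 1 :=
    fun t ht => (le_norm_self _).trans ((hM t ht).trans (le_max_left _ _))
  have hanti := antitoneOn_mul_exp_of_deriv_le hw (k := -k) (convex_Ici T) (by simpa using h)
  refine ⟨max M 1 * exp (k * T), by positivity, fun t ht => ?_⟩
  rcases le_total t T with htT | hTt
  · calc w t ≤ max M 1 * 1 := by simpa using hbound t ⟨ht, htT⟩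
      _ ≤ max M 1 * exp (k * (T - t)) := by gcongr; exact one_le_exp (by nlinarith)
      _ = max M 1 * exp (k * T) * exp (-k * t) := by rw [mul_assoc, ← exp_add]; ring_nf
  · calc w t = w t * exp (-(-k * t)) * exp (-k * t) := by rw [mul_assoc, ← exp_add]; simp
      _ ≤ w T * exp (-(-k * T)) * exp (-k * t) :=
        mul_le_mul_of_nonneg_right (hanti self_mem_Ici hTt hTt) (exp_pos _).le
      _ ≤ max M 1 * exp (k * T) * exp (-k * t) := by
        rw [neg_mul, neg_neg]
        gcongr
        exact hbound T ⟨hT, le_rfl⟩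

lemma exists_exp_decay_of_sub_le_mul_abs_deriv {q : ℝ → ℝ} {α ε C : ℝ} (hq : Differentiable ℝ q)
    (htop : Tendsto q atTop (𝓝 α)) (hε : 0 < ε) (hC : 0 < C) (hlt : ∀ t ≥ 0, q t < α)
    (h : ∀ t, α - ε < q t → q t < α → α - q t ≤ C * |deriv q t|) :
    ∃ θ₁ θ₂, 0 < θ₁ ∧ 0 < θ₂ ∧ ∀ t ≥ 0, α - q t ≤ θ₁ * exp (-θ₂ * t) := by
  obtain ⟨T, hT⟩ := eventually_atTop.1 (htop.eventually_const_lt (show α - ε < α by linarith))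
  set T' := max T 0
  have hnear : ∀ t ≥ T', α - ε < q t ∧ q t < α := fun t ht =>
    ⟨hT t ((le_max_left _ _).trans ht), hlt t ((le_max_right _ _).trans ht)⟩
  have hne : ∀ t ∈ Ici T', deriv q t ≠ 0 := fun t ht h0 => by
    have := h t (hnear t ht).1 (hnear t ht).2
    rw [h0, abs_zero, mul_zero] at this
    linarith [(hnear t ht).2]
  -- by Darboux `q'` has a sign on `[T', ∞)`, and it cannot be negative since `q(T') < α = lim q`
  have hpos : ∀ t ∈ Ici T', 0 < deriv q t := by
    refine (hasDerivWithinAt_forall_lt_or_forall_gt_of_forall_ne (convex_Ici T')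
      (fun t _ => (hq t).hasDerivAt.hasDerivWithinAt) hne).resolve_left fun hneg => ?_
    have hanti : AntitoneOn q (Ici T') :=
      antitoneOn_of_deriv_nonpos (convex_Ici T') hq.continuous.continuousOn
        hq.differentiableOn fun t ht => (hneg t (interior_subset ht)).le
    have : α ≤ q T' :=
      le_of_tendsto htop (eventually_atTop.2 ⟨T', fun t ht => hanti self_mem_Ici ht ht⟩)
    linarith [(hnear T' le_rfl).2]
  obtain ⟨θ, hθ, hdecay⟩ := exists_le_mul_exp_of_deriv_le (w := fun t => α - q t) (k := C⁻¹)
    ((differentiable_const α).sub hq) (inv_nonneg.2 hC.le) (le_max_right T 0) fun t ht => by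
      have := h t (hnear t ht.le).1 (hnear t ht.le).2
      rw [abs_of_pos (hpos t ht.le)] at this
      rw [deriv_const_sub, neg_mul, neg_le_neg_iff, inv_mul_le_iff₀ hC]
      exact this
  exact ⟨θ, C⁻¹, hθ, inv_pos.2 hC, hdecay⟩

lemma frequently_abs_deriv_lt_of_tendsto {f : ℝ → ℝ} {a ε : ℝ} (hf : Differentiable ℝ f)
    (hlim : Tendsto f atTop (𝓝 a)) (hε : 0 < ε) : ∃ᶠ t in atTop, |deriv f t| < ε := by
  obtain ⟨T, hT⟩ := eventually_atTop.1 (hlim.eventually (Metric.ball_mem_nhds a (half_pos hε)))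
  refine frequently_atTop.2 fun T₀ => ?_
  set s := max T T₀
  obtain ⟨c, hc, hslope⟩ := exists_deriv_eq_slope f (lt_add_one s) hf.continuous.continuousOn
    hf.differentiableOn
  refine ⟨c, (le_max_right _ _).trans hc.1.le, ?_⟩
  have h₁ := hT (s + 1) (by linarith [le_max_left T T₀])
  have h₂ := hT s (le_max_left _ _)
  rw [dist_eq, abs_lt] at h₁ h₂
  rw [hslope, add_sub_cancel_left, div_one, abs_lt]
  constructor <;> linarith

end Calculus

section Energy

variable {φ V q : ℝ → ℝ} {α : ℝ}

lemma IsClassicalSolution.PhiStar_sub_eq (hc : ContinuousOn φ (Ici 0)) (hV : Differentiable ℝ V)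
    (hq : IsClassicalSolution φ V q) (hq' : Differentiable ℝ (deriv q)) (t : ℝ) :
    PhiStar φ (deriv q t) - V (q t) = PhiStar φ (deriv q 0) - V (q 0) := by
  obtain ⟨hq₁, hmom⟩ := hq
  have hmomentum : (fun s => if deriv q s = 0 then 0 else φ |deriv q s| * deriv q s) =
      fun s => φ |deriv q s| * deriv q s := by
    funext s
    split_ifs with h <;> simp [h]
  rw [hmomentum] at hmom
  have hfun : (fun s => PhiStar φ (deriv q s) - V (q s)) =
      fun s => deriv q s * (φ |deriv q s| * deriv q s) - Phi φ (deriv q s) - V (q s) := by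
    funext s
    simp only [PhiStar]
    ring
  have hE : ∀ t, HasDerivAt (fun s => PhiStar φ (deriv q s) - V (q s)) 0 t := fun t => by
    rw [hfun]
    exact ((((hq' t).hasDerivAt.fun_mul (hmom t)).fun_sub
      ((hasDerivAt_Phi hc (deriv q t)).comp t (hq' t).hasDerivAt)).fun_sub
      ((hV (q t)).hasDerivAt.comp t (hq₁ t).hasDerivAt)).congr_deriv (by ring)
  exact is_const_of_deriv_eq_zero (fun t => (hE t).differentiableAt) (fun t => (hE t).deriv) t 0

lemma IsHeteroclinic.PhiStar_deriv_eq (hc : ContinuousOn φ (Ici 0)) (hV : ContDiff ℝ 1 V)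
    (hVα : V α = 0) (hq : IsHeteroclinic φ V α q) (t : ℝ) :
    PhiStar φ (deriv q t) = V (q t) := by
  obtain ⟨hsol, hq', -, -, htop, -⟩ := hq
  have hconst := hsol.PhiStar_sub_eq hc (hV.differentiable one_ne_zero) hq'
  suffices PhiStar φ (deriv q 0) - V (q 0) = 0 by linarith [hconst t]
  -- at late times where `q'` is small, both terms of the energy are small
  refine eq_of_forall_dist_le fun η hη => ?_
  have hVq : Tendsto (fun t => V (q t)) atTop (𝓝 0) := hVα ▸ (hV.continuous.tendsto α).comp htop
  have hPhiStar : Tendsto (PhiStar φ) (𝓝 0) (𝓝 0) := by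
    simpa using (continuous_PhiStar hc).tendsto 0
  obtain ⟨ε, hε, hsmall⟩ := Metric.eventually_nhds_iff.1
    (hPhiStar.eventually (Metric.ball_mem_nhds 0 (half_pos hη)))
  obtain ⟨s, hs₁, hs₂⟩ := ((frequently_abs_deriv_lt_of_tendsto hsol.1 htop hε).and_eventually
    (hVq.eventually (Metric.ball_mem_nhds 0 (half_pos hη)))).exists
  have hs₃ := hsmall (show dist (deriv q s) 0 < ε by rwa [dist_zero_right, norm_eq_abs])
  rw [dist_zero_right, norm_eq_abs] at hs₂ hs₃
  rw [← hconst s, dist_zero_right, norm_eq_abs]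
  linarith [abs_sub (PhiStar φ (deriv q s)) (V (q s))]

theorem exists_exp_decay_of_PhiStar_deriv_eq {δ ε C a₁ a₂ : ℝ}
    (hcomp : ∀ s w, 0 ≤ w → w < ε → a₁ * Phi φ w ≤ PhiStar φ s →
      PhiStar φ s ≤ a₂ * Phi φ w → |s| ≤ C * w ∧ w ≤ C * |s|)
    (hε : 0 < ε) (hC : 0 < C) (hδ : 0 < δ)
    (hV : ∀ x, α - δ < x → x ≤ α → a₁ * Phi φ |x - α| ≤ V x ∧ V x ≤ a₂ * Phi φ |x - α|)
    (hq : Differentiable ℝ q) (hE : ∀ t, PhiStar φ (deriv q t) = V (q t)) (h₀ : q 0 < α)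
    (htop : Tendsto q atTop (𝓝 α)) :
    ∃ θ₁ θ₂, 0 < θ₁ ∧ 0 < θ₂ ∧ ∀ t ≥ 0, 0 < α - q t ∧ α - q t ≤ θ₁ * exp (-θ₂ * t) := by
  have hnear : ∀ t, α - min ε δ < q t → q t < α →
      |deriv q t| ≤ C * (α - q t) ∧ α - q t ≤ C * |deriv q t| := by
    intro t h₁ h₂
    obtain ⟨hlo, hhi⟩ := hV (q t) (by linarith [min_le_right ε δ]) h₂.le
    rw [abs_sub_comm, abs_of_pos (sub_pos.2 h₂), ← hE t] at hlo hhi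
    exact hcomp _ _ (sub_pos.2 h₂).le (by linarith [min_le_left ε δ]) hlo hhi
  have hlt := lt_of_abs_deriv_le_mul_sub hq (lt_min hε hδ) (fun t h₁ h₂ => (hnear t h₁ h₂).1) h₀
  obtain ⟨θ₁, θ₂, hθ₁, hθ₂, hdecay⟩ := exists_exp_decay_of_sub_le_mul_abs_deriv hq htop
    (lt_min hε hδ) hC hlt fun t h₁ h₂ => (hnear t h₁ h₂).2
  exact ⟨θ₁, θ₂, hθ₁, hθ₂, fun t ht => ⟨sub_pos.2 (hlt t ht), hdecay t ht⟩⟩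

end Energy

theorem statement2_general (φ V : ℝ → ℝ) (α : ℝ) (q : ℝ → ℝ)
    (hφpos : ∀ t > 0, 0 < φ t)
    (hφ3 : ∃ c₁ c₂ δ₀ r : ℝ, 0 < c₁ ∧ 0 < c₂ ∧ 0 < δ₀ ∧ 1 < r ∧
      ∀ t : ℝ, 0 < t → t ≤ δ₀ → c₁ * t ^ (r - 1) ≤ φ t * t ∧ φ t * t ≤ c₂ * t ^ (r - 1))
    (hφ4 : ContinuousOn φ (Set.Ici 0) ∧ MonotoneOn φ (Set.Ici 0))
    (hα : 0 < α)
    (hV1 : ContDiff ℝ 1 V)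
    (hV2 : V α = 0 ∧ V (-α) = 0 ∧ ∀ t, -α < t → t < α → 0 < V t)
    (hV3 : ∃ a₁ a₂ a₃ a₄ δ : ℝ, 0 < a₁ ∧ 0 < a₂ ∧ 0 < a₃ ∧ 0 < a₄ ∧ 0 < δ ∧ δ < α ∧
      (∀ t, α - δ < t → t ≤ α → a₁ * Phi φ |t - α| ≤ V t ∧ V t ≤ a₂ * Phi φ |t - α|) ∧
      (∀ t, -α ≤ t → t < -α + δ → a₃ * Phi φ |t + α| ≤ V t ∧ V t ≤ a₄ * Phi φ |t + α|))
    (hq : IsHeteroclinic φ V α q) :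
    ∃ θ₁ θ₂ θ₃ θ₄ : ℝ, 0 < θ₁ ∧ 0 < θ₂ ∧ 0 < θ₃ ∧ 0 < θ₄ ∧
      (∀ t : ℝ, 0 ≤ t → 0 < α - q t ∧ α - q t ≤ θ₁ * Real.exp (-θ₂ * t)) ∧
      (∀ t : ℝ, t ≤ 0 → 0 < α + q t ∧ α + q t ≤ θ₃ * Real.exp (θ₄ * t)) := by
  obtain ⟨c₁, c₂, δ₀, r, hc₁, hc₂, hδ₀, hr, hφr⟩ := hφ3
  obtain ⟨hc, hm⟩ := hφ4
  obtain ⟨a₁, a₂, a₃, a₄, δ, ha₁, ha₂, ha₃, ha₄, hδ, -, hVα, hV_α⟩ := hV3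
  have hE := hq.PhiStar_deriv_eq hc hV1 hV2.1
  obtain ⟨⟨hqd, -⟩, -, -, hq₀, htop, hbot⟩ := hq
  have hr₀ : 0 < r := zero_lt_one.trans hr
  obtain ⟨ε₁, hε₁, C₁, hC₁, hcomp₁⟩ :=
    exists_abs_le_and_le_abs_of_PhiStar_comparable hφr hc hm hφpos hc₁ hc₂ hδ₀ hr₀ ha₁ ha₂
  obtain ⟨ε₂, hε₂, C₂, hC₂, hcomp₂⟩ :=
    exists_abs_le_and_le_abs_of_PhiStar_comparable hφr hc hm hφpos hc₁ hc₂ hδ₀ hr₀ ha₃ ha₄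
  obtain ⟨θ₁, θ₂, hθ₁, hθ₂, hright⟩ := exists_exp_decay_of_PhiStar_deriv_eq hcomp₁ hε₁ hC₁ hδ
    hVα hqd hE (by rwa [hq₀]) htop
  -- `t ↦ -q (-t)` solves the problem for the potential `x ↦ V (-x)` and also runs from `-α` to `α`
  obtain ⟨θ₃, θ₄, hθ₃, hθ₄, hleft⟩ := exists_exp_decay_of_PhiStar_deriv_eq
    (α := α) (V := fun x => V (-x)) (q := fun t => -q (-t)) hcomp₂ hε₂ hC₂ hδ
    (fun x h₁ h₂ => by
      simpa [neg_add_eq_sub, abs_sub_comm] using hV_α (-x) (by linarith) (by linarith))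
    (hqd.comp differentiable_neg).neg (fun t => by simpa [deriv_comp_neg] using hE (-t))
    (by simpa [hq₀] using hα) (by simpa using (hbot.comp tendsto_neg_atTop_atBot).neg)
  refine ⟨θ₁, θ₂, θ₃, θ₄, hθ₁, hθ₂, hθ₃, hθ₄, hright, fun t ht => ?_⟩
  simpa using hleft (-t) (neg_nonneg.2 ht)

theorem statement2 (φ V : ℝ → ℝ) (l m α : ℝ) (q : ℝ → ℝ)
    (hφC1 : ContDiffOn ℝ 1 φ (Set.Ioi 0))
    (hφpos : ∀ t > 0, 0 < φ t)
    (hφ1 : ∀ t > 0, 0 < deriv (fun s => φ s * s) t)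
    (hl : 1 < l) (hlm : l ≤ m)
    (hφ2 : ∀ t > 0, l - 1 ≤ deriv (fun s => φ s * s) t / φ t ∧
      deriv (fun s => φ s * s) t / φ t ≤ m - 1)
    (hφ3 : ∃ c₁ c₂ δ₀ r : ℝ, 0 < c₁ ∧ 0 < c₂ ∧ 0 < δ₀ ∧ 1 < r ∧
      ∀ t : ℝ, 0 < t → t ≤ δ₀ → c₁ * t ^ (r - 1) ≤ φ t * t ∧ φ t * t ≤ c₂ * t ^ (r - 1))
    (hφ4 : ContinuousOn φ (Set.Ici 0) ∧ MonotoneOn φ (Set.Ici 0))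
    (hα : 0 < α)
    (hV1 : ContDiff ℝ 1 V) (hVnn : ∀ t, 0 ≤ V t)
    (hV2 : V α = 0 ∧ V (-α) = 0 ∧ ∀ t, -α < t → t < α → 0 < V t)
    (hV3 : ∃ a₁ a₂ a₃ a₄ δ : ℝ, 0 < a₁ ∧ 0 < a₂ ∧ 0 < a₃ ∧ 0 < a₄ ∧ 0 < δ ∧ δ < α ∧
      (∀ t, α - δ < t → t ≤ α → a₁ * Phi φ |t - α| ≤ V t ∧ V t ≤ a₂ * Phi φ |t - α|) ∧
      (∀ t, -α ≤ t → t < -α + δ → a₃ * Phi φ |t + α| ≤ V t ∧ V t ≤ a₄ * Phi φ |t + α|))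
    (hV4 : ∃ k₁ k₂ k₃ k₄ k₅ k₆ k₇ k₈ : ℝ, 0 < k₁ ∧ 0 < k₂ ∧ 0 < k₃ ∧ 0 < k₄ ∧
      0 < k₅ ∧ 0 < k₆ ∧ 0 < k₇ ∧ 0 < k₈ ∧
      (∀ t, 0 ≤ t → t ≤ α →
        -(k₃ * t * φ (k₄ * |t - α|) * |t - α|) ≤ deriv V t ∧
        deriv V t ≤ -(k₁ * t * φ (k₂ * |t - α|) * |t - α|)) ∧
      (∀ t, -α ≤ t → t ≤ 0 →
        -(k₇ * t * φ (k₈ * |t + α|) * |t + α|) ≤ deriv V t ∧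
        deriv V t ≤ -(k₅ * t * φ (k₆ * |t + α|) * |t + α|)))
    (hV5 : ∃ ρ > 0, StrictConvexOn ℝ (Set.Ioo (-α - ρ) (-α + ρ)) V ∧
      StrictConvexOn ℝ (Set.Ioo (α - ρ) (α + ρ)) V)
    (hq : IsHeteroclinic φ V α q) :
    ∃ θ₁ θ₂ θ₃ θ₄ : ℝ, 0 < θ₁ ∧ 0 < θ₂ ∧ 0 < θ₃ ∧ 0 < θ₄ ∧
      (∀ t : ℝ, 0 ≤ t → 0 < α - q t ∧ α - q t ≤ θ₁ * Real.exp (-θ₂ * t)) ∧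
      (∀ t : ℝ, t ≤ 0 → 0 < α + q t ∧ α + q t ≤ θ₃ * Real.exp (θ₄ * t)) :=
  statement2_general φ V α q hφpos hφ3 hφ4 hα hV1 hV2 hV3 hq
end
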